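/- Fix real constants R and x₀ ≥ 0 and set f(u) = x₀ + 2e^{2(u−R)} + 2e^{−2(u+R)} and g(u) = e^{2(u−R)} − e^{−2(u+R)}. Then for all real u and all θ ∈ [0, π], the quantity g'(u)·f(u)·(1 − 3cos²θ)² + 6·g(u)·f'(u)·cos²θ·sin²θ is nonnegative, and it equals zero if and only if u = 0 and cos²θ = 1/3. -/
import Mathlib


/-- The pointwise positivity of (1.26): with f, g, g', f' as in (1.24),
g'·f·(1 − 3cos²θ)² + 6g·f'·cos²θ·sin²θ ≥ 0, with equality iff u = 0 and cos²θ = 1/3. -/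
theorem stmt_11 (R x₀ : ℝ) (hx₀ : 0 ≤ x₀) (u θ : ℝ) (hθ : θ ∈ Set.Icc (0:ℝ) Real.pi) :
    0 ≤ (2 * Real.exp (2 * (u - R)) + 2 * Real.exp (-(2 * (u + R))))
          * (x₀ + 2 * Real.exp (2 * (u - R)) + 2 * Real.exp (-(2 * (u + R))))
          * (1 - 3 * Real.cos θ ^ 2) ^ 2
        + 6 * (Real.exp (2 * (u - R)) - Real.exp (-(2 * (u + R))))
          * (4 * (Real.exp (2 * (u - R)) - Real.exp (-(2 * (u + R)))))
          * Real.cos θ ^ 2 * Real.sin θ ^ 2 ∧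
    ((2 * Real.exp (2 * (u - R)) + 2 * Real.exp (-(2 * (u + R))))
          * (x₀ + 2 * Real.exp (2 * (u - R)) + 2 * Real.exp (-(2 * (u + R))))
          * (1 - 3 * Real.cos θ ^ 2) ^ 2
        + 6 * (Real.exp (2 * (u - R)) - Real.exp (-(2 * (u + R))))
          * (4 * (Real.exp (2 * (u - R)) - Real.exp (-(2 * (u + R)))))
          * Real.cos θ ^ 2 * Real.sin θ ^ 2 = 0
      ↔ u = 0 ∧ Real.cos θ ^ 2 = 1 / 3) := by
  set A := Real.exp (2 * (u - R)) with hAdef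
  set B := Real.exp (-(2 * (u + R))) with hBdef
  have hA : 0 < A := Real.exp_pos _
  have hB : 0 < B := Real.exp_pos _
  set c := Real.cos θ
  set s := Real.sin θ
  have hcs : c ^ 2 + s ^ 2 = 1 := by
    simpa [c, s, add_comm] using Real.sin_sq_add_cos_sq θ
  -- positive coefficient for term 1
  have hcoef : 0 < (2 * A + 2 * B) * (x₀ + 2 * A + 2 * B) := by positivity
  have h1 : 0 ≤ (2 * A + 2 * B) * (x₀ + 2 * A + 2 * B) * (1 - 3 * c ^ 2) ^ 2 := by
    positivity
  have h2eq : 6 * (A - B) * (4 * (A - B)) * c ^ 2 * s ^ 2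
      = 24 * ((A - B) * c * s) ^ 2 := by ring
  have h2 : 0 ≤ 6 * (A - B) * (4 * (A - B)) * c ^ 2 * s ^ 2 := by
    rw [h2eq]; positivity
  refine ⟨by linarith, ?_⟩
  constructor
  · intro h
    have h1z : (2 * A + 2 * B) * (x₀ + 2 * A + 2 * B) * (1 - 3 * c ^ 2) ^ 2 = 0 := by
      linarith
    have h2z : 6 * (A - B) * (4 * (A - B)) * c ^ 2 * s ^ 2 = 0 := by linarith
    have hcsq : c ^ 2 = 1 / 3 := by
      have : (1 - 3 * c ^ 2) ^ 2 = 0 := by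
        rcases mul_eq_zero.1 h1z with h | h
        · exact absurd h (ne_of_gt hcoef)
        · exact h
      have h0 : 1 - 3 * c ^ 2 = 0 := by nlinarith [this]
      linarith
    refine ⟨?_, hcsq⟩
    have hssq : s ^ 2 = 2 / 3 := by linarith
    have hAB : A = B := by
      have h24 : 24 * ((A - B) * c * s) ^ 2 = 0 := by rw [← h2eq]; exact h2z
      have hsq : ((A - B) * c * s) ^ 2 = 0 := by linarith
      have : (A - B) * c * s = 0 := by
        exact pow_eq_zero_iff two_ne_zero |>.1 hsq
      rcases mul_eq_zero.1 this with h' | hs0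
      · rcases mul_eq_zero.1 h' with h'' | hc0
        · linarith
        · exfalso; rw [hc0] at hcsq; norm_num at hcsq
      · exfalso; rw [hs0] at hssq; norm_num at hssq
    have : 2 * (u - R) = -(2 * (u + R)) := Real.exp_injective (by rw [← hAdef, ← hBdef, hAB])
    linarith
  · rintro ⟨hu, hc⟩
    have hAB : A = B := by rw [hAdef, hBdef, hu]; ring_nf
    rw [hAB, hc]
    ring
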